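/- If n < m are integers, then the canonical-form integer game n is strictly greater than the game m modulo the closure of dead ends: for every sum X of dead ends, o^-(n + X) ≥ o^-(m + X), and the two games are not equivalent. -/

import Mathlib

universe u

namespace SetTheory

/-- The old Mathlib `SetTheory.PGame` (removed from Mathlib), with its old definitions. -/
inductive PGame : Type (u + 1)
  | mk : ∀ α β : Type u, (α → PGame) → (β → PGame) → PGame

namespace PGame

def LeftMoves : PGame → Type u
  | mk l _ _ _ => l

def RightMoves : PGame → Type u
  | mk _ r _ _ => r

def moveLeft : ∀ g : PGame, LeftMoves g → PGame
  | mk _l _ L _ => L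

def moveRight : ∀ g : PGame, RightMoves g → PGame
  | mk _ _r _ R => R

inductive IsOption : PGame → PGame → Prop
  | moveLeft {x : PGame} (i : x.LeftMoves) : IsOption (x.moveLeft i) x
  | moveRight {x : PGame} (i : x.RightMoves) : IsOption (x.moveRight i) x

instance : Zero PGame :=
  ⟨⟨PEmpty, PEmpty, PEmpty.elim, PEmpty.elim⟩⟩

def neg : PGame → PGame
  | ⟨l, r, L, R⟩ => ⟨r, l, fun i => neg (R i), fun i => neg (L i)⟩

instance : Neg PGame :=
  ⟨neg⟩

noncomputable instance : Add PGame.{u} :=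
  ⟨fun x y => by
    induction x generalizing y with | mk xl xr _ _ IHxl IHxr => _
    induction y with | mk yl yr yL yR IHyl IHyr => _
    have y := mk yl yr yL yR
    refine ⟨xl ⊕ yl, xr ⊕ yr, Sum.rec ?_ ?_, Sum.rec ?_ ?_⟩
    · exact fun i => IHxl i y
    · exact IHyl
    · exact fun i => IHxr i y
    · exact IHyr⟩

end PGame

end SetTheory

open SetTheory

namespace Misere

/-- `F` is a follower of `G`: reachable from `G` by a (possibly empty) sequence of moves. -/
def Follower (F G : PGame) : Prop := Relation.ReflTransGen PGame.IsOption F G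

def IsLeftEnd (G : PGame) : Prop := IsEmpty G.LeftMoves
def IsRightEnd (G : PGame) : Prop := IsEmpty G.RightMoves

/-- A dead left end: every follower (including itself) is a left end. -/
def DeadLeftEnd (G : PGame) : Prop := ∀ F, Follower F G → IsLeftEnd F
def DeadRightEnd (G : PGame) : Prop := ∀ F, Follower F G → IsRightEnd F
def DeadEnd (G : PGame) : Prop := DeadLeftEnd G ∨ DeadRightEnd G

/-- A game is dead-ending if every end follower is a dead end. -/
def DeadEnding (G : PGame) : Prop :=
  ∀ F, Follower F G → (IsLeftEnd F → DeadLeftEnd F) ∧ (IsRightEnd F → DeadRightEnd F)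

/-- The universe of dead-ending games. -/
def E : Set PGame := {G | DeadEnding G}

/-- `(misereWins G).1` : Left, moving first, wins `G` under misère play;
    `(misereWins G).2` : Right, moving first, wins `G` under misère play. -/
def misereWins : PGame → Prop × Prop
  | PGame.mk l r L R =>
      (IsEmpty l ∨ ∃ i, ¬ (misereWins (L i)).2,
       IsEmpty r ∨ ∃ j, ¬ (misereWins (R j)).1)

def LeftWinsGF (G : PGame) : Prop := (misereWins G).1
def RightWinsGF (G : PGame) : Prop := (misereWins G).2

inductive MOutcome : Type
  | L | N | P | R
deriving DecidableEq

/-- Partial order on misère outcomes: `R` minimal, `L` maximal, `N` and `P` incomparable. -/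
def MOutcome.le : MOutcome → MOutcome → Prop
  | .R, _ => True
  | _, .L => True
  | a, b => a = b

instance : LE MOutcome := ⟨MOutcome.le⟩

/-- The misère outcome of a game. -/
noncomputable def outcome (G : PGame) : MOutcome := by
  classical
  exact if LeftWinsGF G then (if RightWinsGF G then .N else .L)
        else (if RightWinsGF G then .R else .P)

/-- `G ≡ H (mod U)`. -/
def equivMod (U : Set PGame) (G H : PGame) : Prop :=
  ∀ X ∈ U, outcome (G + X) = outcome (H + X)

/-- `G ≧ H (mod U)`. -/
def geMod (U : Set PGame) (G H : PGame) : Prop :=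
  ∀ X ∈ U, outcome (H + X) ≤ outcome (G + X)

/-- `LeftChain G n`: there is a sequence of `n` consecutive Left moves from `G`
ending at the zero position. -/
inductive LeftChain : PGame → ℕ → Prop
  | zero (G : PGame) : IsLeftEnd G → IsRightEnd G → LeftChain G 0
  | succ (G : PGame) (i : G.LeftMoves) (n : ℕ) :
      LeftChain (G.moveLeft i) n → LeftChain G (n + 1)

inductive RightChain : PGame → ℕ → Prop
  | zero (G : PGame) : IsLeftEnd G → IsRightEnd G → RightChain G 0
  | succ (G : PGame) (j : G.RightMoves) (n : ℕ) :
      RightChain (G.moveRight j) n → RightChain G (n + 1)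

/-- Left-length: minimum number of consecutive Left moves needed to reach zero. -/
noncomputable def leftLength (G : PGame) : ℕ := sInf {n | LeftChain G n}

/-- Right-length: minimum number of consecutive Right moves needed to reach zero. -/
noncomputable def rightLength (G : PGame) : ℕ := sInf {n | RightChain G n}

/-- Normal-play canonical form of a nonnegative integer. -/
def natGame : ℕ → PGame
  | 0 => 0
  | n + 1 => PGame.mk PUnit PEmpty (fun _ => natGame n) PEmpty.elim

/-- Normal-play canonical form of an integer (negatives are conjugates). -/
def intGame (n : ℤ) : PGame :=
  if 0 ≤ n then natGame n.toNat else -natGame (-n).toNat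

/-- Normal-play canonical form of the dyadic rational `m / 2 ^ j`. -/
def dyadicGame : ℤ → ℕ → PGame
  | m, 0 => intGame m
  | m, j + 1 =>
      if m % 2 = 0 then dyadicGame (m / 2) j
      else PGame.mk PUnit PUnit (fun _ => dyadicGame ((m - 1) / 2) j)
            (fun _ => dyadicGame ((m + 1) / 2) j)

/-- The closure of dead ends: finite disjunctive sums of dead ends. -/
def DeadEndClosure : Set PGame :=
  {G | ∃ l : List PGame, (∀ x ∈ l, DeadEnd x) ∧ G = l.sum}

end Misere

open Misere SetTheory PGame

/-!
In a sum of dead ends every component is either a dead left end, where only Right can ever move,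
or a dead right end, where only Left can, so neither player's moves affect the other's options.
In misère play the winner is then whoever runs out of moves first: Left, moving first, wins iff
her shortest run of moves to a position without Left moves is no longer than Right's
(`leftEndDist X ≤ rightEndDist X`). Both distances are additive and the integer `k` shifts their
difference by `k`, so the outcome of `k + X` is antitone in `k`; and `X = -m` separates `n` from
`m`, since Left wins `n - m` while `m - m` is a first-player win.
-/

namespace SetTheory.PGame

variable {x y : PGame}

theorem moveLeft_add_cases (k : (x + y).LeftMoves) :
    (∃ i, (x + y).moveLeft k = x.moveLeft i + y) ∨
      ∃ j, (x + y).moveLeft k = x + y.moveLeft j := by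
  cases x; cases y
  rcases k with i | j
  exacts [.inl ⟨i, rfl⟩, .inr ⟨j, rfl⟩]

theorem moveRight_add_cases (k : (x + y).RightMoves) :
    (∃ i, (x + y).moveRight k = x.moveRight i + y) ∨
      ∃ j, (x + y).moveRight k = x + y.moveRight j := by
  cases x; cases y
  rcases k with i | j
  exacts [.inl ⟨i, rfl⟩, .inr ⟨j, rfl⟩]

theorem exists_moveLeft_add_eq_left (i : x.LeftMoves) (y : PGame) :
    ∃ k, (x + y).moveLeft k = x.moveLeft i + y := by
  cases x; cases y
  exact ⟨.inl i, rfl⟩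

theorem exists_moveLeft_add_eq_right (x : PGame) (j : y.LeftMoves) :
    ∃ k, (x + y).moveLeft k = x + y.moveLeft j := by
  cases x; cases y
  exact ⟨.inr j, rfl⟩

theorem exists_moveRight_add_eq_left (i : x.RightMoves) (y : PGame) :
    ∃ k, (x + y).moveRight k = x.moveRight i + y := by
  cases x; cases y
  exact ⟨.inl i, rfl⟩

theorem exists_moveRight_add_eq_right (x : PGame) (j : y.RightMoves) :
    ∃ k, (x + y).moveRight k = x + y.moveRight j := by
  cases x; cases y
  exact ⟨.inr j, rfl⟩

end SetTheory.PGame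

namespace Misere

variable {G X x y : PGame} {k n : ℕ}

theorem isLeftEnd_add_iff : IsLeftEnd (x + y) ↔ IsLeftEnd x ∧ IsLeftEnd y := by
  cases x; cases y
  exact isEmpty_sum

theorem isRightEnd_add_iff : IsRightEnd (x + y) ↔ IsRightEnd x ∧ IsRightEnd y := by
  cases x; cases y
  exact isEmpty_sum

theorem isLeftEnd_zero : IsLeftEnd 0 := inferInstanceAs (IsEmpty PEmpty)

theorem isRightEnd_zero : IsRightEnd 0 := inferInstanceAs (IsEmpty PEmpty)

/-- Unlike `LeftChain`, this may stop at any position without Left moves, not only at `0`. -/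
inductive LeftEndChain : PGame → ℕ → Prop
  | zero (G : PGame) : IsLeftEnd G → LeftEndChain G 0
  | succ (G : PGame) (i : G.LeftMoves) (n : ℕ) :
      LeftEndChain (G.moveLeft i) n → LeftEndChain G (n + 1)

inductive RightEndChain : PGame → ℕ → Prop
  | zero (G : PGame) : IsRightEnd G → RightEndChain G 0
  | succ (G : PGame) (j : G.RightMoves) (n : ℕ) :
      RightEndChain (G.moveRight j) n → RightEndChain G (n + 1)

noncomputable def leftEndDist (G : PGame) : ℕ := sInf {n | LeftEndChain G n}

noncomputable def rightEndDist (G : PGame) : ℕ := sInf {n | RightEndChain G n}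

theorem exists_leftEndChain (G : PGame) : ∃ n, LeftEndChain G n := by
  induction G with
  | mk l r L R ihL _ =>
    rcases isEmpty_or_nonempty l with h | ⟨⟨i⟩⟩
    · exact ⟨0, .zero _ h⟩
    · obtain ⟨n, hn⟩ := ihL i
      exact ⟨n + 1, .succ (mk l r L R) i _ hn⟩

theorem exists_rightEndChain (G : PGame) : ∃ n, RightEndChain G n := by
  induction G with
  | mk l r L R _ ihR =>
    rcases isEmpty_or_nonempty r with h | ⟨⟨j⟩⟩
    · exact ⟨0, .zero _ h⟩
    · obtain ⟨n, hn⟩ := ihR j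
      exact ⟨n + 1, .succ (mk l r L R) j _ hn⟩

theorem leftEndChain_leftEndDist (G : PGame) : LeftEndChain G (leftEndDist G) :=
  Nat.sInf_mem (exists_leftEndChain G)

theorem rightEndChain_rightEndDist (G : PGame) : RightEndChain G (rightEndDist G) :=
  Nat.sInf_mem (exists_rightEndChain G)

theorem LeftEndChain.leftEndDist_le (h : LeftEndChain G n) : leftEndDist G ≤ n := Nat.sInf_le h

theorem RightEndChain.rightEndDist_le (h : RightEndChain G n) : rightEndDist G ≤ n :=
  Nat.sInf_le h

theorem leftEndDist_eq_of_forall (h : ∀ n, LeftEndChain G n ↔ n = k) : leftEndDist G = k :=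
  (h _).1 (leftEndChain_leftEndDist G)

theorem rightEndDist_eq_of_forall (h : ∀ n, RightEndChain G n ↔ n = k) : rightEndDist G = k :=
  (h _).1 (rightEndChain_rightEndDist G)

theorem leftEndDist_eq_zero_iff : leftEndDist G = 0 ↔ IsLeftEnd G := by
  refine ⟨fun h => ?_, fun h => Nat.le_zero.1 (LeftEndChain.zero G h).leftEndDist_le⟩
  have hG := leftEndChain_leftEndDist G
  rw [h] at hG
  cases hG with | zero _ hG => exact hG

theorem rightEndDist_eq_zero_iff : rightEndDist G = 0 ↔ IsRightEnd G := by
  refine ⟨fun h => ?_, fun h => Nat.le_zero.1 (RightEndChain.zero G h).rightEndDist_le⟩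
  have hG := rightEndChain_rightEndDist G
  rw [h] at hG
  cases hG with | zero _ hG => exact hG

theorem leftEndDist_le_moveLeft_add_one (i : G.LeftMoves) :
    leftEndDist G ≤ leftEndDist (G.moveLeft i) + 1 :=
  (LeftEndChain.succ G i _ (leftEndChain_leftEndDist _)).leftEndDist_le

theorem rightEndDist_le_moveRight_add_one (j : G.RightMoves) :
    rightEndDist G ≤ rightEndDist (G.moveRight j) + 1 :=
  (RightEndChain.succ G j _ (rightEndChain_rightEndDist _)).rightEndDist_le

theorem exists_leftEndDist_moveLeft_le (h : leftEndDist G = k + 1) :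
    ∃ i, leftEndDist (G.moveLeft i) ≤ k := by
  have hG := leftEndChain_leftEndDist G
  rw [h] at hG
  cases hG with | succ _ i _ hi => exact ⟨i, hi.leftEndDist_le⟩

theorem exists_rightEndDist_moveRight_le (h : rightEndDist G = k + 1) :
    ∃ j, rightEndDist (G.moveRight j) ≤ k := by
  have hG := rightEndChain_rightEndDist G
  rw [h] at hG
  cases hG with | succ _ j _ hj => exact ⟨j, hj.rightEndDist_le⟩

theorem LeftEndChain.add {p q : ℕ} (hx : LeftEndChain x p) (hy : LeftEndChain y q) :
    LeftEndChain (x + y) (p + q) := by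
  induction hx with
  | zero x hx =>
    induction hy with
    | zero y hy => exact .zero _ (isLeftEnd_add_iff.2 ⟨hx, hy⟩)
    | succ y j q _ ih =>
      obtain ⟨k, hk⟩ := PGame.exists_moveLeft_add_eq_right x j
      exact .succ _ k _ (hk ▸ ih)
  | succ x i p _ ih =>
    obtain ⟨k, hk⟩ := PGame.exists_moveLeft_add_eq_left i y
    rw [Nat.add_right_comm]
    exact .succ _ k _ (hk ▸ ih)

theorem RightEndChain.add {p q : ℕ} (hx : RightEndChain x p) (hy : RightEndChain y q) :
    RightEndChain (x + y) (p + q) := by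
  induction hx with
  | zero x hx =>
    induction hy with
    | zero y hy => exact .zero _ (isRightEnd_add_iff.2 ⟨hx, hy⟩)
    | succ y j q _ ih =>
      obtain ⟨k, hk⟩ := PGame.exists_moveRight_add_eq_right x j
      exact .succ _ k _ (hk ▸ ih)
  | succ x i p _ ih =>
    obtain ⟨k, hk⟩ := PGame.exists_moveRight_add_eq_left i y
    rw [Nat.add_right_comm]
    exact .succ _ k _ (hk ▸ ih)

theorem LeftEndChain.exists_of_add (h : LeftEndChain (x + y) n) :
    ∃ p q, p + q = n ∧ LeftEndChain x p ∧ LeftEndChain y q := by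
  induction n generalizing x y with
  | zero =>
    cases h with
    | zero _ h =>
      exact ⟨0, 0, rfl, .zero _ (isLeftEnd_add_iff.1 h).1, .zero _ (isLeftEnd_add_iff.1 h).2⟩
  | succ n ih =>
    cases h with
    | succ _ k _ hk =>
      rcases PGame.moveLeft_add_cases k with ⟨i, e⟩ | ⟨j, e⟩ <;> rw [e] at hk
      · obtain ⟨p, q, rfl, hp, hq⟩ := ih hk
        exact ⟨p + 1, q, Nat.add_right_comm p 1 q, .succ _ i _ hp, hq⟩
      · obtain ⟨p, q, rfl, hp, hq⟩ := ih hk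
        exact ⟨p, q + 1, rfl, hp, .succ _ j _ hq⟩

theorem RightEndChain.exists_of_add (h : RightEndChain (x + y) n) :
    ∃ p q, p + q = n ∧ RightEndChain x p ∧ RightEndChain y q := by
  induction n generalizing x y with
  | zero =>
    cases h with
    | zero _ h =>
      exact ⟨0, 0, rfl, .zero _ (isRightEnd_add_iff.1 h).1, .zero _ (isRightEnd_add_iff.1 h).2⟩
  | succ n ih =>
    cases h with
    | succ _ k _ hk =>
      rcases PGame.moveRight_add_cases k with ⟨i, e⟩ | ⟨j, e⟩ <;> rw [e] at hk
      · obtain ⟨p, q, rfl, hp, hq⟩ := ih hk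
        exact ⟨p + 1, q, Nat.add_right_comm p 1 q, .succ _ i _ hp, hq⟩
      · obtain ⟨p, q, rfl, hp, hq⟩ := ih hk
        exact ⟨p, q + 1, rfl, hp, .succ _ j _ hq⟩

theorem leftEndDist_add (x y : PGame) : leftEndDist (x + y) = leftEndDist x + leftEndDist y := by
  refine le_antisymm
    ((leftEndChain_leftEndDist x).add (leftEndChain_leftEndDist y)).leftEndDist_le ?_
  obtain ⟨p, q, hpq, hp, hq⟩ := (leftEndChain_leftEndDist (x + y)).exists_of_add
  exact hpq ▸ add_le_add hp.leftEndDist_le hq.leftEndDist_le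

theorem rightEndDist_add (x y : PGame) :
    rightEndDist (x + y) = rightEndDist x + rightEndDist y := by
  refine le_antisymm
    ((rightEndChain_rightEndDist x).add (rightEndChain_rightEndDist y)).rightEndDist_le ?_
  obtain ⟨p, q, hpq, hp, hq⟩ := (rightEndChain_rightEndDist (x + y)).exists_of_add
  exact hpq ▸ add_le_add hp.rightEndDist_le hq.rightEndDist_le

noncomputable def endDistDiff (G : PGame) : ℤ := leftEndDist G - rightEndDist G

theorem endDistDiff_add (x y : PGame) : endDistDiff (x + y) = endDistDiff x + endDistDiff y := by
  simp only [endDistDiff, leftEndDist_add, rightEndDist_add]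
  push_cast
  ring

theorem endDistDiff_zero : endDistDiff 0 = 0 := by
  simp only [endDistDiff, leftEndDist_eq_zero_iff.2 isLeftEnd_zero,
    rightEndDist_eq_zero_iff.2 isRightEnd_zero, sub_self]

theorem leftWinsGF_iff :
    LeftWinsGF G ↔ IsLeftEnd G ∨ ∃ i, ¬ RightWinsGF (G.moveLeft i) := by
  cases G; exact Iff.rfl

theorem rightWinsGF_iff :
    RightWinsGF G ↔ IsRightEnd G ∨ ∃ j, ¬ LeftWinsGF (G.moveRight j) := by
  cases G; exact Iff.rfl

theorem leftWinsGF_iff_of_moveLeft (hR : ∀ i, rightEndDist (G.moveLeft i) = rightEndDist G)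
    (ih : ∀ i, RightWinsGF (G.moveLeft i) ↔
      rightEndDist (G.moveLeft i) ≤ leftEndDist (G.moveLeft i)) :
    LeftWinsGF G ↔ leftEndDist G ≤ rightEndDist G := by
  rw [leftWinsGF_iff, ← leftEndDist_eq_zero_iff]
  constructor
  · rintro (h | ⟨i, hi⟩)
    · omega
    · have := leftEndDist_le_moveLeft_add_one i
      rw [ih, hR] at hi
      omega
  · intro h
    rcases hL : leftEndDist G with _ | k
    · exact .inl rfl
    · obtain ⟨i, hi⟩ := exists_leftEndDist_moveLeft_le hL
      refine .inr ⟨i, ?_⟩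
      rw [ih, hR]
      omega

theorem rightWinsGF_iff_of_moveRight (hL : ∀ j, leftEndDist (G.moveRight j) = leftEndDist G)
    (ih : ∀ j, LeftWinsGF (G.moveRight j) ↔
      leftEndDist (G.moveRight j) ≤ rightEndDist (G.moveRight j)) :
    RightWinsGF G ↔ rightEndDist G ≤ leftEndDist G := by
  rw [rightWinsGF_iff, ← rightEndDist_eq_zero_iff]
  constructor
  · rintro (h | ⟨j, hj⟩)
    · omega
    · have := rightEndDist_le_moveRight_add_one j
      rw [ih, hL] at hj
      omega
  · intro h
    rcases hR : rightEndDist G with _ | k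
    · exact .inl rfl
    · obtain ⟨j, hj⟩ := exists_rightEndDist_moveRight_le hR
      refine .inr ⟨j, ?_⟩
      rw [ih, hL]
      omega

theorem DeadLeftEnd.isLeftEnd (h : DeadLeftEnd G) : IsLeftEnd G := h G .refl

theorem DeadRightEnd.isRightEnd (h : DeadRightEnd G) : IsRightEnd G := h G .refl

theorem DeadLeftEnd.moveRight (h : DeadLeftEnd G) (j : G.RightMoves) :
    DeadLeftEnd (G.moveRight j) :=
  fun F hF => h F (hF.tail (.moveRight j))

theorem DeadRightEnd.moveLeft (h : DeadRightEnd G) (i : G.LeftMoves) :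
    DeadRightEnd (G.moveLeft i) :=
  fun F hF => h F (hF.tail (.moveLeft i))

theorem DeadLeftEnd.of_moveRight (hG : IsLeftEnd G) (h : ∀ j, DeadLeftEnd (G.moveRight j)) :
    DeadLeftEnd G := by
  intro F hF
  cases hF with
  | refl => exact hG
  | tail hF hFG =>
    cases hFG with
    | moveLeft i => exact hG.elim i
    | moveRight j => exact h j F hF

theorem DeadRightEnd.of_moveLeft (hG : IsRightEnd G) (h : ∀ i, DeadRightEnd (G.moveLeft i)) :
    DeadRightEnd G := by
  intro F hF
  cases hF with
  | refl => exact hG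
  | tail hF hFG =>
    cases hFG with
    | moveLeft i => exact h i F hF
    | moveRight j => exact hG.elim j

theorem zero_mem_deadEndClosure : (0 : PGame) ∈ DeadEndClosure := ⟨[], by simp, rfl⟩

theorem add_mem_deadEndClosure (hx : DeadEnd x) (hX : X ∈ DeadEndClosure) :
    x + X ∈ DeadEndClosure := by
  obtain ⟨l, hl, rfl⟩ := hX
  exact ⟨x :: l, by simpa [hx] using hl, rfl⟩

/-- A Left move in a sum of dead ends is made in a dead right end, which contributes nothing to
`rightEndDist`. -/
theorem moveLeft_mem_deadEndClosure (hX : X ∈ DeadEndClosure) (i : X.LeftMoves) :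
    X.moveLeft i ∈ DeadEndClosure ∧ rightEndDist (X.moveLeft i) = rightEndDist X := by
  obtain ⟨l, hl, rfl⟩ := hX
  induction l with
  | nil => exact isLeftEnd_zero.elim i
  | cons x t ih =>
    have hx : DeadEnd x := hl x List.mem_cons_self
    have ht : ∀ y ∈ t, DeadEnd y := fun y hy => hl y (List.mem_cons_of_mem x hy)
    revert i
    rw [List.sum_cons]
    intro i
    rcases PGame.moveLeft_add_cases i with ⟨i, e⟩ | ⟨j, e⟩ <;> rw [e]
    · have hxR : DeadRightEnd x := hx.resolve_left fun h => h.isLeftEnd.elim i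
      have hxR' := hxR.moveLeft i
      refine ⟨add_mem_deadEndClosure (.inr hxR') ⟨t, ht, rfl⟩, ?_⟩
      rw [rightEndDist_add, rightEndDist_add, rightEndDist_eq_zero_iff.2 hxR.isRightEnd,
        rightEndDist_eq_zero_iff.2 hxR'.isRightEnd]
    · obtain ⟨hmem, hdist⟩ := ih ht j
      exact ⟨add_mem_deadEndClosure hx hmem, by rw [rightEndDist_add, rightEndDist_add, hdist]⟩

theorem moveRight_mem_deadEndClosure (hX : X ∈ DeadEndClosure) (j : X.RightMoves) :
    X.moveRight j ∈ DeadEndClosure ∧ leftEndDist (X.moveRight j) = leftEndDist X := by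
  obtain ⟨l, hl, rfl⟩ := hX
  induction l with
  | nil => exact isRightEnd_zero.elim j
  | cons x t ih =>
    have hx : DeadEnd x := hl x List.mem_cons_self
    have ht : ∀ y ∈ t, DeadEnd y := fun y hy => hl y (List.mem_cons_of_mem x hy)
    revert j
    rw [List.sum_cons]
    intro j
    rcases PGame.moveRight_add_cases j with ⟨i, e⟩ | ⟨j, e⟩ <;> rw [e]
    · have hxL : DeadLeftEnd x := hx.resolve_right fun h => h.isRightEnd.elim i
      have hxL' := hxL.moveRight i
      refine ⟨add_mem_deadEndClosure (.inl hxL') ⟨t, ht, rfl⟩, ?_⟩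
      rw [leftEndDist_add, leftEndDist_add, leftEndDist_eq_zero_iff.2 hxL.isLeftEnd,
        leftEndDist_eq_zero_iff.2 hxL'.isLeftEnd]
    · obtain ⟨hmem, hdist⟩ := ih ht j
      exact ⟨add_mem_deadEndClosure hx hmem, by rw [leftEndDist_add, leftEndDist_add, hdist]⟩

theorem winsGF_iff_of_mem_deadEndClosure (hX : X ∈ DeadEndClosure) :
    (LeftWinsGF X ↔ leftEndDist X ≤ rightEndDist X) ∧
      (RightWinsGF X ↔ rightEndDist X ≤ leftEndDist X) := by
  induction X with
  | mk l r L R ihL ihR =>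
    have hXL := moveLeft_mem_deadEndClosure hX
    have hXR := moveRight_mem_deadEndClosure hX
    exact ⟨leftWinsGF_iff_of_moveLeft (fun i => (hXL i).2) (fun i => (ihL i (hXL i).1).2),
      rightWinsGF_iff_of_moveRight (fun j => (hXR j).2) (fun j => (ihR j (hXR j).1).1)⟩

def outcomeOfEndDistDiff (d : ℤ) : MOutcome :=
  if d < 0 then .L else if d = 0 then .N else .R

theorem outcomeOfEndDistDiff_le_of_le {d d' : ℤ} (h : d ≤ d') :
    outcomeOfEndDistDiff d' ≤ outcomeOfEndDistDiff d := by
  unfold outcomeOfEndDistDiff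
  split_ifs <;> first | trivial | omega

theorem outcome_eq_of_mem_deadEndClosure (hX : X ∈ DeadEndClosure) :
    outcome X = outcomeOfEndDistDiff (endDistDiff X) := by
  obtain ⟨hL, hR⟩ := winsGF_iff_of_mem_deadEndClosure hX
  unfold outcome outcomeOfEndDistDiff endDistDiff
  simp only [hL, hR]
  split_ifs <;> first | rfl | omega

theorem deadRightEnd_natGame (k : ℕ) : DeadRightEnd (natGame k) := by
  induction k with
  | zero => exact .of_moveLeft isRightEnd_zero isLeftEnd_zero.elim
  | succ k ih => exact .of_moveLeft (inferInstanceAs (IsEmpty PEmpty)) fun _ => ih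

theorem deadLeftEnd_neg_natGame (k : ℕ) : DeadLeftEnd (-natGame k) := by
  induction k with
  | zero => exact .of_moveRight (inferInstanceAs (IsEmpty PEmpty)) (PEmpty.elim ·)
  | succ k ih => exact .of_moveRight (inferInstanceAs (IsEmpty PEmpty)) fun _ => ih

theorem deadEnd_intGame (n : ℤ) : DeadEnd (intGame n) := by
  unfold intGame
  split
  · exact .inr (deadRightEnd_natGame _)
  · exact .inl (deadLeftEnd_neg_natGame _)

theorem leftEndChain_natGame_iff (k n : ℕ) : LeftEndChain (natGame k) n ↔ n = k := by
  induction k generalizing n with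
  | zero =>
    refine ⟨fun h => ?_, fun h => h ▸ .zero (natGame 0) isLeftEnd_zero⟩
    cases h with
    | zero => rfl
    | succ _ i => exact isLeftEnd_zero.elim i
  | succ k ih =>
    refine ⟨fun h => ?_, fun h => h ▸ .succ (natGame (k + 1)) .unit _ ((ih k).2 rfl)⟩
    cases h with
    | zero _ h => exact h.elim .unit
    | succ _ _ n hn => rw [(ih n).1 hn]

theorem rightEndChain_neg_natGame_iff (k n : ℕ) : RightEndChain (-natGame k) n ↔ n = k := by
  induction k generalizing n with
  | zero =>
    refine ⟨fun h => ?_, fun h => h ▸ .zero (-natGame 0) (inferInstanceAs (IsEmpty PEmpty))⟩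
    cases h with
    | zero => rfl
    | succ _ j => exact PEmpty.elim j
  | succ k ih =>
    refine ⟨fun h => ?_, fun h => h ▸ .succ (-natGame (k + 1)) .unit _ ((ih k).2 rfl)⟩
    cases h with
    | zero _ h => exact h.elim .unit
    | succ _ _ n hn => rw [(ih n).1 hn]

theorem endDistDiff_intGame (n : ℤ) : endDistDiff (intGame n) = n := by
  unfold intGame endDistDiff
  split
  · rw [leftEndDist_eq_of_forall (leftEndChain_natGame_iff _),
      rightEndDist_eq_zero_iff.2 (deadRightEnd_natGame _).isRightEnd]
    omega
  · rw [leftEndDist_eq_zero_iff.2 (deadLeftEnd_neg_natGame _).isLeftEnd,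
      rightEndDist_eq_of_forall (rightEndChain_neg_natGame_iff _)]
    omega

theorem outcome_intGame_add (k : ℤ) (hX : X ∈ DeadEndClosure) :
    outcome (intGame k + X) = outcomeOfEndDistDiff (k + endDistDiff X) := by
  rw [outcome_eq_of_mem_deadEndClosure (add_mem_deadEndClosure (deadEnd_intGame k) hX),
    endDistDiff_add, endDistDiff_intGame]

end Misere

/-- integers are totally ordered modulo the closure of dead ends:
if n < m then game n is strictly greater than game m. -/
theorem stmt7 (n m : ℤ) (h : n < m) :
    geMod DeadEndClosure (intGame n) (intGame m) ∧
    ¬ equivMod DeadEndClosure (intGame n) (intGame m) := by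
  refine ⟨fun X hX => ?_, fun hnm => ?_⟩
  · rw [outcome_intGame_add n hX, outcome_intGame_add m hX]
    exact outcomeOfEndDistDiff_le_of_le (by omega)
  · have hX := add_mem_deadEndClosure (deadEnd_intGame (-m)) zero_mem_deadEndClosure
    have hout := hnm _ hX
    rw [outcome_intGame_add n hX, outcome_intGame_add m hX, endDistDiff_add,
      endDistDiff_intGame, endDistDiff_zero] at hout
    have hL : outcomeOfEndDistDiff (n + (-m + 0)) = .L := if_pos (by omega)
    have hN : outcomeOfEndDistDiff (m + (-m + 0)) = .N := by
      rw [outcomeOfEndDistDiff, if_neg (by omega), if_pos (by omega)]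
    rw [hL, hN] at hout
    cases hout
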